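/- For all integers r, t with 1 ≤ r ≤ t, the strong metric dimension of the strong product of the odd cycles C_{2r+1} and C_{2t+1} satisfies 3rt + 2r + 2t + 1 − ⌊r/2⌋ ≤ dim_s(C_{2r+1} ⊠ C_{2t+1}) ≤ 3rt + 2r + 2t + 1. -/

import Mathlib

/-
Distances in a strong product are the maxima of the coordinate distances, and in `C_n` the
distance from `u` to `v` is `min ((u - v) mod n) ((v - u) mod n)`.

Upper bound: the `rt` vertices `(a, b)` with `a < r`, `b < t` may be left out. For two of them,
take the coordinate in which they are farther apart; there the pair is strongly resolved in its
cycle by a vertex `z ≥ r` (resp. `z ≥ t`), and `z` lifts to a strongly resolving vertex of the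
product outside the omitted block.

Lower bound: a vertex strongly resolving a mutually maximally distant pair is one of the two, so
the complement of a strong metric generator is independent in the strong resolving graph. Pairs
whose second coordinates are at distance `t`, or whose first coordinates are at distance `r` and
second coordinates at distance `< r`, are mutually maximally distant. A set of vertices of
`C_{2k+1}` containing no pair `x, x + k` has at most `k` elements, so an independent set has at
most `t` distinct second coordinates and at most `r` vertices over each of them.
-/

open SimpleGraph Finset

variable {α β : Type*}

/-- The strong product of two simple graphs: distinct vertices `(a,b)` and `(c,d)` are adjacent
iff (`a = c` or `a ~ c`) and (`b = d` or `b ~ d`). -/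
def strongProd (G : SimpleGraph α) (H : SimpleGraph β) : SimpleGraph (α × β) where
  Adj x y := x ≠ y ∧ (x.1 = y.1 ∨ G.Adj x.1 y.1) ∧ (x.2 = y.2 ∨ H.Adj x.2 y.2)
  symm := by
    constructor
    rintro x y ⟨h1, h2, h3⟩
    exact ⟨h1.symm, h2.imp Eq.symm (fun a => a.symm), h3.imp Eq.symm (fun a => a.symm)⟩
  loopless := ⟨fun x h => h.1 rfl⟩

/-- The Cartesian sum (disjunctive product) of two simple graphs. -/
def cartSum (G : SimpleGraph α) (H : SimpleGraph β) : SimpleGraph (α × β) where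
  Adj x y := x ≠ y ∧ (G.Adj x.1 y.1 ∨ H.Adj x.2 y.2)
  symm := by
    constructor
    rintro x y ⟨h1, h2⟩
    exact ⟨h1.symm, h2.imp (fun a => a.symm) (fun a => a.symm)⟩
  loopless := ⟨fun x h => h.1 rfl⟩

/-- `u` is maximally distant from `v` in `G`. -/
def MaximallyDistantFrom (G : SimpleGraph α) (u v : α) : Prop :=
  ∀ w, G.Adj u w → G.dist v w ≤ G.dist u v

/-- `u` and `v` are mutually maximally distant in `G`. -/
def MutuallyMaximallyDistant (G : SimpleGraph α) (u v : α) : Prop :=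
  MaximallyDistantFrom G u v ∧ MaximallyDistantFrom G v u

/-- The strong resolving graph of `G`. -/
def strongResolvingGraph (G : SimpleGraph α) : SimpleGraph α where
  Adj u v := u ≠ v ∧ MutuallyMaximallyDistant G u v
  symm := by constructor; rintro u v ⟨h1, h2, h3⟩; exact ⟨h1.symm, h3, h2⟩
  loopless := ⟨fun x h => h.1 rfl⟩

/-- A finset of vertices is independent if no two of its (distinct) members are adjacent. -/
def IsIndepFinset (G : SimpleGraph α) (s : Finset α) : Prop :=
  ∀ u ∈ s, ∀ v ∈ s, u ≠ v → ¬ G.Adj u v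

/-- The independence number `β(G)`. -/
noncomputable def indepNum (G : SimpleGraph α) [Fintype α] : ℕ :=
  sSup {n | ∃ s : Finset α, IsIndepFinset G s ∧ s.card = n}

/-- `w` strongly resolves `u` and `v` in `G`. -/
def StronglyResolves (G : SimpleGraph α) (w u v : α) : Prop :=
  G.dist w u = G.dist w v + G.dist v u ∨ G.dist w v = G.dist w u + G.dist u v

/-- A strong metric generator for `G`. -/
def IsStrongMetricGenerator (G : SimpleGraph α) (s : Finset α) : Prop :=
  ∀ u v : α, u ≠ v → ∃ w ∈ s, StronglyResolves G w u v

/-- The strong metric dimension of `G`. -/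
noncomputable def sdim (G : SimpleGraph α) [Fintype α] : ℕ :=
  sInf {n | ∃ s : Finset α, IsStrongMetricGenerator G s ∧ s.card = n}

namespace SimpleGraph

variable {G : SimpleGraph α}

theorem Walk.apply_le_apply_add_length {f : α → ℕ}
    (hf : ∀ ⦃x y⦄, G.Adj x y → f x ≤ f y + 1) {u v : α} (p : G.Walk u v) :
    f u ≤ f v + p.length := by
  induction p with
  | nil => simp
  | cons h _ ih => have := hf h; rw [Walk.length_cons]; omega

theorem Reachable.apply_le_apply_add_dist {f : α → ℕ}
    (hf : ∀ ⦃x y⦄, G.Adj x y → f x ≤ f y + 1) {u v : α} (h : G.Reachable u v) :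
    f u ≤ f v + G.dist u v := by
  obtain ⟨p, hp⟩ := h.exists_walk_length_eq_dist
  exact hp ▸ p.apply_le_apply_add_length hf

theorem dist_le_dist_add_one_of_eq_or_adj {u w : α} (h : u = w ∨ G.Adj u w) (v : α) :
    G.dist u v ≤ G.dist w v + 1 := by
  rcases h with rfl | h
  · omega
  · have := h.reachable.dist_triangle_left v
    rw [dist_eq_one_iff_adj.mpr h] at this
    omega

theorem Reachable.exists_adj_dist_add_one_eq {u v : α} (h : G.Reachable u v) (hne : u ≠ v) :
    ∃ w, G.Adj u w ∧ G.dist w v + 1 = G.dist u v := by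
  obtain ⟨p, hp⟩ := h.exists_walk_length_eq_dist
  cases p with
  | nil => exact absurd rfl hne
  | cons hadj q =>
    have := dist_le q
    have := dist_le_dist_add_one_of_eq_or_adj (.inr hadj) v
    rw [Walk.length_cons] at hp
    exact ⟨_, hadj, by omega⟩

theorem Connected.exists_eq_or_adj_dist_le (hG : G.Connected) {u v : α} {L : ℕ}
    (h : G.dist u v ≤ L + 1) : ∃ w, (u = w ∨ G.Adj u w) ∧ G.dist w v ≤ L := by
  by_cases huv : u = v
  · exact ⟨u, .inl rfl, by simp [huv]⟩
  · obtain ⟨w, hadj, hw⟩ := (hG.preconnected u v).exists_adj_dist_add_one_eq huv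
    exact ⟨w, .inr hadj, by omega⟩

end SimpleGraph

section StrongProduct

variable {G : SimpleGraph α} {H : SimpleGraph β}

theorem strongProd_adj {x y : α × β} : (strongProd G H).Adj x y ↔
    x ≠ y ∧ (x.1 = y.1 ∨ G.Adj x.1 y.1) ∧ (x.2 = y.2 ∨ H.Adj x.2 y.2) :=
  Iff.rfl

theorem exists_walk_strongProd_length_le (hG : G.Connected) (hH : H.Connected) (L : ℕ) :
    ∀ {a c : α} {b d : β}, G.dist a c ≤ L → H.dist b d ≤ L →
      ∃ p : (strongProd G H).Walk (a, b) (c, d), p.length ≤ L := by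
  induction L with
  | zero =>
    intro a c b d hac hbd
    obtain rfl := hG.dist_eq_zero_iff.mp (Nat.le_zero.mp hac)
    obtain rfl := hH.dist_eq_zero_iff.mp (Nat.le_zero.mp hbd)
    exact ⟨.nil, le_rfl⟩
  | succ L ih =>
    intro a c b d hac hbd
    obtain ⟨a', ha', ha'c⟩ := hG.exists_eq_or_adj_dist_le hac
    obtain ⟨b', hb', hb'd⟩ := hH.exists_eq_or_adj_dist_le hbd
    obtain ⟨p, hp⟩ := ih ha'c hb'd
    by_cases hstay : (a, b) = (a', b')
    · obtain ⟨rfl, rfl⟩ := Prod.mk.inj hstay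
      exact ⟨p, by omega⟩
    · refine ⟨.cons (strongProd_adj.mpr ⟨hstay, ha', hb'⟩) p, ?_⟩
      rw [Walk.length_cons]
      omega

theorem strongProd_connected (hG : G.Connected) (hH : H.Connected) :
    (strongProd G H).Connected := by
  have : Nonempty (α × β) := ⟨(hG.nonempty.some, hH.nonempty.some)⟩
  refine .mk fun x y => ?_
  obtain ⟨p, -⟩ := exists_walk_strongProd_length_le hG hH _
    (le_max_left (G.dist x.1 y.1) (H.dist x.2 y.2)) (le_max_right _ _)
  exact p.reachable

theorem strongProd_dist (hG : G.Connected) (hH : H.Connected) (x y : α × β) :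
    (strongProd G H).dist x y = max (G.dist x.1 y.1) (H.dist x.2 y.2) := by
  have hP := (strongProd_connected hG hH).preconnected x y
  refine le_antisymm ?_ (max_le ?_ ?_)
  · obtain ⟨p, hp⟩ := exists_walk_strongProd_length_le hG hH _
      (le_max_left (G.dist x.1 y.1) (H.dist x.2 y.2)) (le_max_right _ _)
    exact (dist_le p).trans hp
  · simpa using hP.apply_le_apply_add_dist (f := fun z => G.dist z.1 y.1)
      fun _ _ h => dist_le_dist_add_one_of_eq_or_adj (strongProd_adj.mp h).2.1 y.1
  · simpa using hP.apply_le_apply_add_dist (f := fun z => H.dist z.2 y.2)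
      fun _ _ h => dist_le_dist_add_one_of_eq_or_adj (strongProd_adj.mp h).2.2 y.2

end StrongProduct

section StrongResolution

variable {G : SimpleGraph α}

theorem StronglyResolves.symm {w u v : α} (h : StronglyResolves G w u v) :
    StronglyResolves G w v u :=
  Or.symm h

theorem mutuallyMaximallyDistant_of_forall_dist_le {u v : α}
    (h : ∀ x y, G.dist x y ≤ G.dist u v) : MutuallyMaximallyDistant G u v :=
  ⟨fun w _ => h v w, fun w _ => (h u w).trans_eq dist_comm⟩

theorem MaximallyDistantFrom.eq_of_dist_eq_dist_add_dist (hG : G.Connected) {u v w : α}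
    (hv : MaximallyDistantFrom G v u) (h : G.dist w u = G.dist w v + G.dist v u) : w = v := by
  by_contra hwv
  obtain ⟨x, hvx, hxw⟩ := (hG.preconnected v w).exists_adj_dist_add_one_eq (Ne.symm hwv)
  have hux : G.dist u x ≤ G.dist v u := hv x hvx
  have := hG.dist_triangle (u := w) (v := x) (w := u)
  have := dist_comm (G := G) (u := w) (v := x)
  have := dist_comm (G := G) (u := x) (v := u)
  have := dist_comm (G := G) (u := w) (v := v)
  omega

theorem StronglyResolves.eq_or_eq_of_mutuallyMaximallyDistant (hG : G.Connected) {w u v : α}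
    (huv : MutuallyMaximallyDistant G u v) (hw : StronglyResolves G w u v) : w = u ∨ w = v :=
  hw.elim (fun h => .inr (huv.2.eq_of_dist_eq_dist_add_dist hG h))
    (fun h => .inl (huv.1.eq_of_dist_eq_dist_add_dist hG h))

variable [Fintype α]

theorem IsStrongMetricGenerator.sdim_le_card {s : Finset α} (hs : IsStrongMetricGenerator G s) :
    sdim G ≤ s.card :=
  Nat.sInf_le ⟨s, hs, rfl⟩

theorem IsStrongMetricGenerator.isIndepFinset_compl [DecidableEq α] (hG : G.Connected)
    {s : Finset α} (hs : IsStrongMetricGenerator G s) :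
    IsIndepFinset (strongResolvingGraph G) sᶜ := by
  rintro u hu v hv huv ⟨-, hmmd⟩
  obtain ⟨w, hws, hw⟩ := hs u v huv
  rcases hw.eq_or_eq_of_mutuallyMaximallyDistant hG hmmd with rfl | rfl
  · exact mem_compl.mp hu hws
  · exact mem_compl.mp hv hws

theorem card_sub_le_sdim_of_forall_isIndepFinset_card_le (hG : G.Connected) {m : ℕ}
    (h : ∀ s, IsIndepFinset (strongResolvingGraph G) s → s.card ≤ m) :
    Fintype.card α - m ≤ sdim G := by
  classical
  refine le_csInf ⟨_, univ, fun u _ _ => ⟨u, mem_univ u, .inr (by simp)⟩, rfl⟩ ?_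
  rintro _ ⟨s, hs, rfl⟩
  have := h _ (hs.isIndepFinset_compl hG)
  rw [card_compl] at this
  omega

end StrongResolution

section StrongResolutionStrongProduct

variable {G : SimpleGraph α} {H : SimpleGraph β}

theorem MaximallyDistantFrom.strongProd_of_dist_lt (hG : G.Connected) (hH : H.Connected)
    {u v : α × β} (h₁ : MaximallyDistantFrom G u.1 v.1)
    (h₂ : H.dist u.2 v.2 < G.dist u.1 v.1) : MaximallyDistantFrom (strongProd G H) u v := by
  intro w hw
  obtain ⟨-, hw₁, hw₂⟩ := strongProd_adj.mp hw
  have hG' : G.dist v.1 w.1 ≤ G.dist u.1 v.1 := by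
    rcases hw₁ with h | h
    · rw [← h, dist_comm]
    · exact h₁ _ h
  have hH' := dist_le_dist_add_one_of_eq_or_adj (hw₂.imp Eq.symm Adj.symm) v.2
  rw [strongProd_dist hG hH, strongProd_dist hG hH, dist_comm (u := v.2)]
  omega

theorem MutuallyMaximallyDistant.strongProd_of_dist_lt (hG : G.Connected) (hH : H.Connected)
    {u v : α × β} (h₁ : MutuallyMaximallyDistant G u.1 v.1)
    (h₂ : H.dist u.2 v.2 < G.dist u.1 v.1) : MutuallyMaximallyDistant (strongProd G H) u v :=
  ⟨h₁.1.strongProd_of_dist_lt hG hH h₂,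
    h₁.2.strongProd_of_dist_lt hG hH (by rwa [dist_comm, dist_comm (G := G)])⟩

theorem StronglyResolves.exists_strongProd_fst (hG : G.Connected) (hH : H.Connected)
    {z a c : α} {b d : β} (hz : StronglyResolves G z a c) (h : H.dist b d ≤ G.dist a c) :
    ∃ y, StronglyResolves (strongProd G H) (z, y) (a, b) (c, d) := by
  have := dist_comm (G := G) (u := a) (v := c)
  have := dist_comm (G := H) (u := b) (v := d)
  rcases hz with hz | hz
  · refine ⟨d, .inl ?_⟩
    simp only [strongProd_dist hG hH, dist_self]
    omega
  · refine ⟨b, .inr ?_⟩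
    simp only [strongProd_dist hG hH, dist_self]
    omega

theorem StronglyResolves.exists_strongProd_snd (hG : G.Connected) (hH : H.Connected)
    {a c : α} {z b d : β} (hz : StronglyResolves H z b d) (h : G.dist a c ≤ H.dist b d) :
    ∃ x, StronglyResolves (strongProd G H) (x, z) (a, b) (c, d) := by
  have := dist_comm (G := G) (u := a) (v := c)
  have := dist_comm (G := H) (u := b) (v := d)
  rcases hz with hz | hz
  · refine ⟨c, .inl ?_⟩
    simp only [strongProd_dist hG hH, dist_self]
    omega
  · refine ⟨a, .inr ?_⟩
    simp only [strongProd_dist hG hH, dist_self]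
    omega

theorem isStrongMetricGenerator_strongProd_compl_product [Fintype α] [Fintype β] [DecidableEq α]
    [DecidableEq β] (hG : G.Connected) (hH : H.Connected) {A : Finset α} {B : Finset β}
    (hA : ∀ a ∈ A, ∀ c ∈ A, ∃ z ∉ A, StronglyResolves G z a c)
    (hB : ∀ b ∈ B, ∀ d ∈ B, ∃ z ∉ B, StronglyResolves H z b d) :
    IsStrongMetricGenerator (strongProd G H) (A ×ˢ B)ᶜ := by
  rintro ⟨a, b⟩ ⟨c, d⟩ -
  by_cases hu : (a, b) ∈ A ×ˢ B
  swap
  · exact ⟨_, mem_compl.mpr hu, .inr (by simp)⟩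
  by_cases hv : (c, d) ∈ A ×ˢ B
  swap
  · exact ⟨_, mem_compl.mpr hv, .inl (by simp)⟩
  rw [mem_product] at hu hv
  rcases le_total (H.dist b d) (G.dist a c) with h | h
  · obtain ⟨z, hzA, hz⟩ := hA a hu.1 c hv.1
    obtain ⟨y, hy⟩ := hz.exists_strongProd_fst hG hH h
    exact ⟨(z, y), by simp [hzA], hy⟩
  · obtain ⟨z, hzB, hz⟩ := hB b hu.2 d hv.2
    obtain ⟨x, hx⟩ := hz.exists_strongProd_snd hG hH h
    exact ⟨(x, z), by simp [hzB], hx⟩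

end StrongResolutionStrongProduct

section Cycle

theorem Fin.val_sub_eq_ite {n : ℕ} (a b : Fin n) :
    (a - b).val = if b.val ≤ a.val then a.val - b.val else n + a.val - b.val := by
  split_ifs with h
  · exact Fin.sub_val_of_le h
  · exact Fin.coe_sub_iff_lt.mpr (by omega)

theorem cycleGraph_dist_le_val_sub {n : ℕ} (u v : Fin n) :
    (cycleGraph n).dist u v ≤ (u - v).val := by
  match n with
  | 0 => exact u.elim0
  | 1 => simp [Subsingleton.elim u v]
  | m + 2 =>
    induction h : (u - v).val generalizing u with
    | zero => simp [sub_eq_zero.mp (Fin.ext h)]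
    | succ j ih =>
      have hadj : (cycleGraph (m + 2)).Adj u (u - 1) :=
        cycleGraph_adj.mpr (.inl (sub_sub_cancel u 1))
      have hj : (u - 1 - v).val = j := by
        rw [sub_right_comm, Fin.coe_sub_one, if_neg (fun h0 => by simp [h0] at h), h]
        rfl
      have := hadj.reachable.dist_triangle_left v
      rw [dist_eq_one_iff_adj.mpr hadj] at this
      have := ih (u - 1) hj
      omega

theorem cycleGraph_dist {n : ℕ} (u v : Fin n) :
    (cycleGraph n).dist u v = min (u - v).val (v - u).val := by
  refine le_antisymm (le_min (cycleGraph_dist_le_val_sub u v)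
    (dist_comm.trans_le (cycleGraph_dist_le_val_sub v u))) ?_
  have hf : ∀ ⦃x y : Fin n⦄, (cycleGraph n).Adj x y →
      min (x - v).val (v - x).val ≤ min (y - v).val (v - y).val + 1 := by
    intro x y hxy
    rw [cycleGraph_adj'] at hxy
    have := x.isLt; have := y.isLt; have := v.isLt
    simp only [Fin.val_sub_eq_ite] at hxy ⊢
    split_ifs at hxy ⊢ <;> omega
  have := (cycleGraph_preconnected u v).apply_le_apply_add_dist hf
  rwa [Fin.sub_val_of_le le_rfl, Nat.sub_self, min_self, zero_add] at this

variable {k : ℕ}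

theorem cycleGraph_dist_le (u v : Fin (2 * k + 1)) : (cycleGraph (2 * k + 1)).dist u v ≤ k := by
  have := u.isLt; have := v.isLt
  rw [cycleGraph_dist, Fin.val_sub_eq_ite, Fin.val_sub_eq_ite]
  split_ifs <;> omega

theorem cycleGraph_dist_self_add (x : Fin (2 * k + 1)) :
    (cycleGraph (2 * k + 1)).dist x (x + ⟨k, by omega⟩) = k := by
  obtain rfl | hk := k.eq_zero_or_pos
  · exact (cycleGraph_dist_le _ _).antisymm (Nat.zero_le _)
  rw [cycleGraph_dist, sub_add_cancel_left, add_sub_cancel_left, Fin.val_neg', Fin.val_mk,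
    Nat.mod_eq_of_lt (show 2 * k + 1 - k < 2 * k + 1 by omega)]
  omega

theorem card_le_of_forall_cycleGraph_dist_ne (hk : 0 < k) {T : Finset (Fin (2 * k + 1))}
    (hT : ∀ x ∈ T, ∀ y ∈ T, x ≠ y → (cycleGraph (2 * k + 1)).dist x y ≠ k) :
    T.card ≤ k := by
  have hdisj : Disjoint T (T.map (addRightEmbedding ⟨k, by omega⟩)) := by
    refine disjoint_left.mpr fun y hy hy' => ?_
    obtain ⟨x, hx, rfl⟩ := mem_map.mp hy'
    rw [addRightEmbedding_apply] at hy
    have hx' := cycleGraph_dist_self_add x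
    refine hT x hx _ hy (fun h => ?_) hx'
    rw [← h, dist_self] at hx'
    omega
  have := card_le_univ (T ∪ T.map (addRightEmbedding ⟨k, by omega⟩))
  rw [card_union_of_disjoint hdisj, card_map, Fintype.card_fin] at this
  omega

theorem exists_stronglyResolves_cycleGraph_notMem_Iio {a c : Fin (2 * k + 1)}
    (ha : a ∈ Iio ⟨k, by omega⟩) (hc : c ∈ Iio ⟨k, by omega⟩) :
    ∃ z ∉ Iio ⟨k, by omega⟩, StronglyResolves (cycleGraph (2 * k + 1)) z a c := by
  wlog hac : a ≤ c generalizing a c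
  · obtain ⟨z, hz, h⟩ := this hc ha (le_of_not_ge hac)
    exact ⟨z, hz, h.symm⟩
  simp only [mem_Iio, Fin.lt_def] at ha hc
  -- `z = c + k + 1` is at distance `k` from `c`, and `a` lies on the shorter arc from `z` to `c`
  refine ⟨⟨c + k + 1, by omega⟩, by simp only [mem_Iio, Fin.lt_def]; omega, .inr ?_⟩
  simp only [cycleGraph_dist, Fin.val_sub_eq_ite]
  split_ifs <;> omega

theorem mutuallyMaximallyDistant_cycleGraph_of_dist_eq {u v : Fin (2 * k + 1)}
    (h : (cycleGraph (2 * k + 1)).dist u v = k) :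
    MutuallyMaximallyDistant (cycleGraph (2 * k + 1)) u v :=
  mutuallyMaximallyDistant_of_forall_dist_le fun x y => (cycleGraph_dist_le x y).trans_eq h.symm

end Cycle

section OddCycleProduct

variable {r t : ℕ}

theorem mutuallyMaximallyDistant_strongProd_cycleGraph_of_dist_snd_eq (hrt : r ≤ t)
    {u v : Fin (2 * r + 1) × Fin (2 * t + 1)} (h : (cycleGraph (2 * t + 1)).dist u.2 v.2 = t) :
    MutuallyMaximallyDistant (strongProd (cycleGraph (2 * r + 1)) (cycleGraph (2 * t + 1))) u v :=
  mutuallyMaximallyDistant_of_forall_dist_le fun x y => by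
    rw [strongProd_dist cycleGraph_connected cycleGraph_connected,
      strongProd_dist cycleGraph_connected cycleGraph_connected, h]
    have := cycleGraph_dist_le x.1 y.1
    have := cycleGraph_dist_le x.2 y.2
    omega

theorem mutuallyMaximallyDistant_strongProd_cycleGraph_of_dist_fst_eq
    {u v : Fin (2 * r + 1) × Fin (2 * t + 1)} (h₁ : (cycleGraph (2 * r + 1)).dist u.1 v.1 = r)
    (h₂ : (cycleGraph (2 * t + 1)).dist u.2 v.2 < r) :
    MutuallyMaximallyDistant (strongProd (cycleGraph (2 * r + 1)) (cycleGraph (2 * t + 1))) u v :=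
  (mutuallyMaximallyDistant_cycleGraph_of_dist_eq h₁).strongProd_of_dist_lt cycleGraph_connected
    cycleGraph_connected (by rwa [h₁])

theorem card_le_of_isIndepFinset_strongResolvingGraph_strongProd_cycleGraph (hr : 0 < r)
    (hrt : r ≤ t) {S : Finset (Fin (2 * r + 1) × Fin (2 * t + 1))}
    (hS : IsIndepFinset
      (strongResolvingGraph (strongProd (cycleGraph (2 * r + 1)) (cycleGraph (2 * t + 1)))) S) :
    S.card ≤ r * t := by
  classical
  have hS' : ∀ u ∈ S, ∀ v ∈ S, u ≠ v → ¬ MutuallyMaximallyDistant _ u v :=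
    fun u hu v hv huv h => hS u hu v hv huv ⟨huv, h⟩
  have hsnd : (S.image Prod.snd).card ≤ t := by
    refine card_le_of_forall_cycleGraph_dist_ne (hr.trans_le hrt) ?_
    simp only [mem_image]
    rintro _ ⟨u, hu, rfl⟩ _ ⟨v, hv, rfl⟩ hne h
    exact hS' u hu v hv (fun huv => hne (huv ▸ rfl))
      (mutuallyMaximallyDistant_strongProd_cycleGraph_of_dist_snd_eq hrt h)
  have hfiber : ∀ b ∈ S.image Prod.snd, (S.filter (·.2 = b)).card ≤ r := by
    intro b _
    rw [← card_image_of_injOn (f := Prod.fst) ?_]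
    · refine card_le_of_forall_cycleGraph_dist_ne hr ?_
      simp only [mem_image, mem_filter]
      rintro _ ⟨u, ⟨hu, hub⟩, rfl⟩ _ ⟨v, ⟨hv, hvb⟩, rfl⟩ hne h
      refine hS' u hu v hv (fun huv => hne (huv ▸ rfl))
        (mutuallyMaximallyDistant_strongProd_cycleGraph_of_dist_fst_eq h ?_)
      rwa [hub, ← hvb, dist_self]
    · rintro u hu v hv h
      rw [mem_coe, mem_filter] at hu hv
      exact Prod.ext h (hu.2.trans hv.2.symm)
  calc S.card ≤ r * (S.image Prod.snd).card := card_le_mul_card_image S r hfiber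
    _ ≤ r * t := Nat.mul_le_mul_left r hsnd

end OddCycleProduct

theorem sdim_strongProd_oddCycles_bounds (r t : ℕ) (hr : 1 ≤ r) (hrt : r ≤ t) :
    3 * r * t + 2 * r + 2 * t + 1 - r / 2 ≤
        sdim (strongProd (cycleGraph (2 * r + 1)) (cycleGraph (2 * t + 1))) ∧
      sdim (strongProd (cycleGraph (2 * r + 1)) (cycleGraph (2 * t + 1))) ≤
        3 * r * t + 2 * r + 2 * t + 1 := by
  classical
  have hcard : (2 * r + 1) * (2 * t + 1) = 3 * r * t + 2 * r + 2 * t + 1 + r * t := by ring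
  have hlower := card_sub_le_sdim_of_forall_isIndepFinset_card_le
    (strongProd_connected cycleGraph_connected cycleGraph_connected)
    fun _ hS => card_le_of_isIndepFinset_strongResolvingGraph_strongProd_cycleGraph hr hrt hS
  have hupper := (isStrongMetricGenerator_strongProd_compl_product
    (G := cycleGraph (2 * r + 1)) (H := cycleGraph (2 * t + 1))
    cycleGraph_connected cycleGraph_connected
    (fun _ ha _ hc => exists_stronglyResolves_cycleGraph_notMem_Iio ha hc)
    (fun _ hb _ hd => exists_stronglyResolves_cycleGraph_notMem_Iio hb hd)).sdim_le_card
  rw [card_compl, card_product, Fin.card_Iio, Fin.card_Iio] at hupper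
  simp only [Fintype.card_prod, Fintype.card_fin] at hlower hupper
  omega
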